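/- The Fresnel sine integral S(X) = ∫₀^X sin(πx²/2) dx is nonnegative for all X ≥ 0. -/

import Mathlib

/-!
The substitution `x = √(u² + 2)` shifts the phase `πx²/2` by `π`, so it carries each positive lobe
`[√(4k), √(4k+2)]` of the integrand onto the following negative lobe, multiplied by the Jacobian
`u / √(u² + 2) < 1`. So on any initial piece of a negative lobe the integral is outweighed by the
matching piece of the preceding positive lobe, and `S` stays nonnegative by induction on the lobes.
-/

open Real intervalIntegral Set

noncomputable def fresnelS (X : ℝ) : ℝ := ∫ x in (0:ℝ)..X, Real.sin (π * x ^ 2 / 2)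

lemma continuous_sin_pi_mul_sq_div_two : Continuous fun x : ℝ => sin (π * x ^ 2 / 2) := by
  fun_prop

lemma fresnelS_sub_fresnelS (a b : ℝ) :
    fresnelS b - fresnelS a = ∫ x in a..b, sin (π * x ^ 2 / 2) :=
  integral_interval_sub_left (continuous_sin_pi_mul_sq_div_two.intervalIntegrable _ _)
    (continuous_sin_pi_mul_sq_div_two.intervalIntegrable _ _)

lemma sin_pi_mul_sq_div_two_nonneg (k : ℕ) {u : ℝ} (hu : u ∈ Icc √(4 * k) √(4 * k + 2)) :
    0 ≤ sin (π * u ^ 2 / 2) := by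
  have hu₀ : 0 ≤ u := (sqrt_nonneg _).trans hu.1
  have h₁ : 4 * k ≤ u ^ 2 := (sqrt_le_left hu₀).1 hu.1
  have h₂ : u ^ 2 ≤ 4 * k + 2 := (le_sqrt hu₀ (by positivity)).1 hu.2
  rw [show π * u ^ 2 / 2 = π * (u ^ 2 / 2 - 2 * k) + k * (2 * π) by ring, sin_add_nat_mul_two_pi]
  exact sin_nonneg_of_nonneg_of_le_pi (by nlinarith [pi_pos]) (by nlinarith [pi_pos])

lemma sin_pi_mul_sqrt_sq_add_two_sq_div_two (u : ℝ) :
    sin (π * √(u ^ 2 + 2) ^ 2 / 2) = -sin (π * u ^ 2 / 2) := by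
  rw [sq_sqrt (by positivity), show π * (u ^ 2 + 2) / 2 = π * u ^ 2 / 2 + π by ring, sin_add_pi]

lemma continuous_div_sqrt_sq_add_two : Continuous fun u : ℝ => u / √(u ^ 2 + 2) :=
  continuous_id.div (by fun_prop) fun u => (sqrt_pos.2 (by positivity)).ne'

lemma integral_sqrt_sq_add_two (a b : ℝ) :
    ∫ x in √(a ^ 2 + 2)..√(b ^ 2 + 2), sin (π * x ^ 2 / 2) =
      -∫ u in a..b, sin (π * u ^ 2 / 2) * (u / √(u ^ 2 + 2)) := by
  have hderiv (u : ℝ) : HasDerivAt (fun u : ℝ => √(u ^ 2 + 2)) (u / √(u ^ 2 + 2)) u := by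
    convert ((hasDerivAt_pow 2 u).add_const 2).sqrt (by positivity) using 1
    field_simp
    push_cast
    ring
  rw [← integral_comp_mul_deriv (fun u _ => hderiv u) continuous_div_sqrt_sq_add_two.continuousOn
    continuous_sin_pi_mul_sq_div_two, ← integral_neg]
  simp only [Function.comp_apply, sin_pi_mul_sqrt_sq_add_two_sq_div_two, neg_mul]

lemma integral_add_integral_sqrt_sq_add_two_nonneg {a b : ℝ} (hab : a ≤ b)
    (hf : ∀ u ∈ Icc a b, 0 ≤ sin (π * u ^ 2 / 2)) :
    0 ≤ (∫ x in a..b, sin (π * x ^ 2 / 2)) +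
      ∫ x in √(a ^ 2 + 2)..√(b ^ 2 + 2), sin (π * x ^ 2 / 2) := by
  rw [integral_sqrt_sq_add_two, ← sub_eq_add_neg, ← integral_sub
    (continuous_sin_pi_mul_sq_div_two.intervalIntegrable _ _)
    ((continuous_sin_pi_mul_sq_div_two.mul continuous_div_sqrt_sq_add_two).intervalIntegrable
      (u := fun u => sin (π * u ^ 2 / 2) * (u / √(u ^ 2 + 2))) _ _)]
  refine integral_nonneg hab fun u hu => ?_
  have hjac : u / √(u ^ 2 + 2) ≤ 1 :=
    div_le_one_of_le₀ (le_sqrt_of_sq_le (by linarith)) (sqrt_nonneg _)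
  nlinarith [hf u hu]

lemma fresnelS_nonneg_of_fresnelS_sqrt_four_mul_nonneg {k : ℕ} (hk : 0 ≤ fresnelS √(4 * k))
    {X : ℝ} (hX : 0 ≤ X) (hX₁ : 4 * k ≤ X ^ 2) (hX₂ : X ^ 2 ≤ 4 * k + 4) : 0 ≤ fresnelS X := by
  set a := √(4 * k)
  set b := √(4 * k + 2)
  have hab : a ≤ b := sqrt_le_sqrt (by linarith)
  have haX : a ≤ X := (sqrt_le_left hX).2 hX₁
  rcases le_or_gt (X ^ 2) (4 * k + 2) with hXb | hXb
  · have hXb : X ≤ b := le_sqrt_of_sq_le hXb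
    have hlobe : 0 ≤ ∫ u in a..X, sin (π * u ^ 2 / 2) := integral_nonneg haX fun u hu =>
      sin_pi_mul_sq_div_two_nonneg k (Icc_subset_Icc le_rfl hXb hu)
    linarith [fresnelS_sub_fresnelS a X]
  -- `X` lies in the negative lobe: pair `[√(4k+2), X]` with `[√(4k), Y]`, where `X = √(Y² + 2)`.
  set Y := √(X ^ 2 - 2)
  have hY : Y ^ 2 = X ^ 2 - 2 := sq_sqrt (by linarith)
  have haY : a ≤ Y := sqrt_le_sqrt (by linarith)
  have hYb : Y ≤ b := sqrt_le_sqrt (by linarith)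
  have hpair := integral_add_integral_sqrt_sq_add_two_nonneg haY fun u hu =>
    sin_pi_mul_sq_div_two_nonneg k (Icc_subset_Icc le_rfl hYb hu)
  rw [sq_sqrt (by positivity), hY, sub_add_cancel, sqrt_sq hX] at hpair
  have hmid : 0 ≤ ∫ u in Y..b, sin (π * u ^ 2 / 2) := integral_nonneg hYb fun u hu =>
    sin_pi_mul_sq_div_two_nonneg k (Icc_subset_Icc haY le_rfl hu)
  linarith [fresnelS_sub_fresnelS a Y, fresnelS_sub_fresnelS Y b, fresnelS_sub_fresnelS b X]

lemma fresnelS_nonneg_of_sq_le_four_mul (k : ℕ) {X : ℝ} (hX : 0 ≤ X) (hXk : X ^ 2 ≤ 4 * k) :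
    0 ≤ fresnelS X := by
  induction k generalizing X with
  | zero =>
    obtain rfl : X = 0 := by norm_num at hXk; nlinarith
    simp [fresnelS]
  | succ k ih =>
    push_cast at hXk
    rcases le_or_gt (X ^ 2) (4 * k) with hXk' | hXk'
    · exact ih hX hXk'
    · exact fresnelS_nonneg_of_fresnelS_sqrt_four_mul_nonneg
        (ih (sqrt_nonneg _) (sq_sqrt (by positivity)).le) hX hXk'.le (by linarith)

theorem fresnelS_nonneg {X : ℝ} (hX : 0 ≤ X) : 0 ≤ fresnelS X :=
  fresnelS_nonneg_of_sq_le_four_mul ⌈X ^ 2 / 4⌉₊ hX (by linarith [Nat.le_ceil (X ^ 2 / 4)])
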